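/- The equation (Ψ^LΨ^L) holds: for all objects A₁, A₂, A₃, B₁, B₂ of C, the composite (Ψ^L_{A₁⊗A₃,A₂;B₁} ⊗ 1_{B₂}) ∘ Ψ^L_{A₁,A₃;(B₁⊗A₂)⊗B₂} equals the composite ((E(a⁻¹_{A₁,A₃,A₂}) ∘ E(1_{A₁} ⊗ c_{A₂,A₃}) ∘ E(a_{A₁,A₂,A₃})) ⊗ 1_{B₁⊗B₂}) ∘ Ψ^L_{A₁⊗A₂,A₃;B₁⊗B₂} ∘ (Ψ^L_{A₁,A₂;B₁} ⊗ 1_{B₂⊗A₃}), where on each side the unique structural coherence isomorphisms of C (built from a, l, r and their inverses) are inserted between the displayed factors so that the composites are well-typed morphisms with common source a bracketing of EA₁ ⊗ B₁ ⊗ A₂ ⊗ B₂ ⊗ A₃ and common target E((A₁⊗A₃)⊗A₂) ⊗ (B₁⊗B₂) (in Lean this can be expressed with monoidal coherent composition ⊗≫). -/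

import Mathlib

/-!
Unfolding `Ψ^L`, the interchange law pushes every `ψ^L` to the end, so each side becomes a
braiding of `B₁, A₂, B₂, A₃` followed by two applications of `ψ^L`. On the right, the factor
`E(1 ⊗ c_{A₂,A₃})` moves through the two `ψ^L`'s by (ψ^L a) and naturality, where it becomes the
braiding of `A₂` and `A₃`; the two braidings then agree by naturality and the hexagon identity.
-/

open CategoryTheory MonoidalCategory

section Braided

variable {C : Type*} [Category C] [MonoidalCategory C] [BraidedCategory C]

lemma braiding_comp_whiskerLeft_braiding_whiskerRight (X Y Z W : C) :
    (𝟙 (X ⊗ (Y ⊗ (Z ⊗ W))) ⊗≫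
      ((β_ ((X ⊗ Y) ⊗ Z) W).hom ≫ W ◁ ((β_ X Y).hom ▷ Z)) ⊗≫
      𝟙 ((W ⊗ Y) ⊗ (X ⊗ Z)))
    = 𝟙 (X ⊗ (Y ⊗ (Z ⊗ W))) ⊗≫
      ((β_ X Y).hom ▷ (Z ⊗ W)) ⊗≫
      (Y ◁ (β_ (X ⊗ Z) W).hom) ⊗≫
      ((β_ Y W).hom ▷ (X ⊗ Z)) ⊗≫
      𝟙 ((W ⊗ Y) ⊗ (X ⊗ Z)) := by
  rw [← BraidedCategory.braiding_naturality_left]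
  simp only [BraidedCategory.braiding_tensor_left_hom]
  monoidal

end Braided

section LeftStrength

variable {C : Type*} [Category C] [MonoidalCategory C] {E : C ⥤ C}
  {ψL : ∀ A B : C, E.obj A ⊗ B ⟶ E.obj (A ⊗ B)}

lemma whiskerLeft_comp_psiL
    (ψL_nat : ∀ {A A' B B' : C} (f : A ⟶ A') (g : B ⟶ B'),
      (E.map f ⊗ₘ g) ≫ ψL A' B' = ψL A B ≫ E.map (f ⊗ₘ g))
    (A : C) {B B' : C} (g : B ⟶ B') :
    (E.obj A ◁ g) ≫ ψL A B' = ψL A B ≫ E.map (A ◁ g) := by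
  simpa using ψL_nat (𝟙 A) g

lemma psiL_whiskerRight_comp_psiL
    (ψLa : ∀ A B C' : C,
      (ψL A B ⊗ₘ 𝟙 C') ≫ ψL (A ⊗ B) C' ≫ E.map (α_ A B C').hom
        = (α_ (E.obj A) B C').hom ≫ ψL A (B ⊗ C'))
    (A B D : C) :
    (ψL A B ▷ D) ≫ ψL (A ⊗ B) D
      = (α_ (E.obj A) B D).hom ≫ ψL A (B ⊗ D) ≫ E.map (α_ A B D).inv := by
  rw [← cancel_mono (E.map (α_ A B D).hom)]
  simpa [← Functor.map_comp] using ψLa A B D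

lemma psiL_whiskerRight_comp_psiL_comp_map_swap [BraidedCategory C]
    (ψL_nat : ∀ {A A' B B' : C} (f : A ⟶ A') (g : B ⟶ B'),
      (E.map f ⊗ₘ g) ≫ ψL A' B' = ψL A B ≫ E.map (f ⊗ₘ g))
    (ψLa : ∀ A B C' : C,
      (ψL A B ⊗ₘ 𝟙 C') ≫ ψL (A ⊗ B) C' ≫ E.map (α_ A B C').hom
        = (α_ (E.obj A) B C').hom ≫ ψL A (B ⊗ C'))
    (A B D : C) :
    (ψL A B ▷ D) ≫ ψL (A ⊗ B) D ≫
        E.map ((α_ A B D).hom ≫ A ◁ (β_ B D).hom ≫ (α_ A D B).inv)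
      = (α_ (E.obj A) B D).hom ≫ E.obj A ◁ (β_ B D).hom ≫ (α_ (E.obj A) D B).inv ≫
        (ψL A D ▷ B) ≫ ψL (A ⊗ D) B := by
  rw [reassoc_of% psiL_whiskerRight_comp_psiL ψLa A B D, psiL_whiskerRight_comp_psiL ψLa,
    Iso.inv_hom_id_assoc, reassoc_of% whiskerLeft_comp_psiL ψL_nat A (β_ B D).hom]
  simp only [← Functor.map_comp, Iso.inv_hom_id_assoc]

end LeftStrength

theorem PsiLPsiL_general {C : Type*} [Category C] [MonoidalCategory C] [SymmetricCategory C]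
    (E : C ⥤ C)
    (ψL : ∀ A B : C, E.obj A ⊗ B ⟶ E.obj (A ⊗ B))
    (ψL_nat : ∀ {A A' B B' : C} (f : A ⟶ A') (g : B ⟶ B'),
      (E.map f ⊗ₘ g) ≫ ψL A' B' = ψL A B ≫ E.map (f ⊗ₘ g))
    (ψLa : ∀ A B C' : C,
      (ψL A B ⊗ₘ 𝟙 C') ≫ ψL (A ⊗ B) C' ≫ E.map (α_ A B C').hom
        = (α_ (E.obj A) B C').hom ≫ ψL A (B ⊗ C'))
    (ΨL : ∀ A₁ A₂ B : C, (E.obj A₁ ⊗ B) ⊗ A₂ ⟶ E.obj (A₁ ⊗ A₂) ⊗ B)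
    (hΨL : ∀ A₁ A₂ B : C,
      ΨL A₁ A₂ B = (α_ (E.obj A₁) B A₂).hom ≫
        (𝟙 (E.obj A₁) ⊗ₘ (β_ B A₂).hom) ≫
        (α_ (E.obj A₁) A₂ B).inv ≫ (ψL A₁ A₂ ⊗ₘ 𝟙 B)) :
    ∀ A₁ A₂ A₃ B₁ B₂ : C,
      (𝟙 (E.obj A₁ ⊗ (B₁ ⊗ (A₂ ⊗ (B₂ ⊗ A₃)))) ⊗≫
        ΨL A₁ A₃ ((B₁ ⊗ A₂) ⊗ B₂) ⊗≫
        (ΨL (A₁ ⊗ A₃) A₂ B₁ ⊗ₘ 𝟙 B₂) ⊗≫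
        𝟙 (E.obj ((A₁ ⊗ A₃) ⊗ A₂) ⊗ (B₁ ⊗ B₂)))
      = (𝟙 (E.obj A₁ ⊗ (B₁ ⊗ (A₂ ⊗ (B₂ ⊗ A₃)))) ⊗≫
        (ΨL A₁ A₂ B₁ ⊗ₘ 𝟙 (B₂ ⊗ A₃)) ⊗≫
        ΨL (A₁ ⊗ A₂) A₃ (B₁ ⊗ B₂) ⊗≫
        ((E.map (α_ A₁ A₂ A₃).hom ≫ E.map (𝟙 A₁ ⊗ₘ (β_ A₂ A₃).hom) ≫
            E.map (α_ A₁ A₃ A₂).inv) ⊗ₘ 𝟙 (B₁ ⊗ B₂))) := by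
  intro A₁ A₂ A₃ B₁ B₂
  calc _ = 𝟙 _ ⊗≫ E.obj A₁ ◁ (β_ ((B₁ ⊗ A₂) ⊗ B₂) A₃).hom ⊗≫
        (ψL A₁ A₃ ▷ _ ≫ E.obj (A₁ ⊗ A₃) ◁ ((β_ B₁ A₂).hom ▷ B₂)) ⊗≫
        ((ψL (A₁ ⊗ A₃) A₂ ▷ B₁) ▷ B₂) ⊗≫ 𝟙 _ := by rw [hΨL, hΨL]; monoidal
    _ = 𝟙 _ ⊗≫ E.obj A₁ ◁ (𝟙 (B₁ ⊗ (A₂ ⊗ (B₂ ⊗ A₃))) ⊗≫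
          ((β_ ((B₁ ⊗ A₂) ⊗ B₂) A₃).hom ≫ A₃ ◁ ((β_ B₁ A₂).hom ▷ B₂)) ⊗≫
          𝟙 ((A₃ ⊗ A₂) ⊗ (B₁ ⊗ B₂))) ⊗≫
        ((ψL A₁ A₃ ▷ A₂ ≫ ψL (A₁ ⊗ A₃) A₂) ▷ (B₁ ⊗ B₂)) ⊗≫ 𝟙 _ := by
      rw [← whisker_exchange]; monoidal
    _ = 𝟙 _ ⊗≫ E.obj A₁ ◁ (𝟙 (B₁ ⊗ (A₂ ⊗ (B₂ ⊗ A₃))) ⊗≫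
          ((β_ B₁ A₂).hom ▷ (B₂ ⊗ A₃)) ⊗≫ (A₂ ◁ (β_ (B₁ ⊗ B₂) A₃).hom) ⊗≫
          ((β_ A₂ A₃).hom ▷ (B₁ ⊗ B₂)) ⊗≫ 𝟙 ((A₃ ⊗ A₂) ⊗ (B₁ ⊗ B₂))) ⊗≫
        ((ψL A₁ A₃ ▷ A₂ ≫ ψL (A₁ ⊗ A₃) A₂) ▷ (B₁ ⊗ B₂)) ⊗≫ 𝟙 _ := by
      rw [braiding_comp_whiskerLeft_braiding_whiskerRight]
    _ = 𝟙 _ ⊗≫ E.obj A₁ ◁ ((β_ B₁ A₂).hom ▷ (B₂ ⊗ A₃)) ⊗≫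
          E.obj A₁ ◁ (A₂ ◁ (β_ (B₁ ⊗ B₂) A₃).hom) ⊗≫
          ((ψL A₁ A₂ ▷ A₃ ≫ ψL (A₁ ⊗ A₂) A₃ ≫
            E.map ((α_ A₁ A₂ A₃).hom ≫ A₁ ◁ (β_ A₂ A₃).hom ≫ (α_ A₁ A₃ A₂).inv)) ▷ (B₁ ⊗ B₂)) ⊗≫
          𝟙 _ := by
      rw [psiL_whiskerRight_comp_psiL_comp_map_swap ψL_nat ψLa]; monoidal
    _ = 𝟙 _ ⊗≫ E.obj A₁ ◁ ((β_ B₁ A₂).hom ▷ (B₂ ⊗ A₃)) ⊗≫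
          (ψL A₁ A₂ ▷ _ ≫ E.obj (A₁ ⊗ A₂) ◁ (β_ (B₁ ⊗ B₂) A₃).hom) ⊗≫
          ((ψL (A₁ ⊗ A₂) A₃ ≫
            E.map ((α_ A₁ A₂ A₃).hom ≫ A₁ ◁ (β_ A₂ A₃).hom ≫ (α_ A₁ A₃ A₂).inv)) ▷ (B₁ ⊗ B₂)) ⊗≫
          𝟙 _ := by
      rw [← whisker_exchange]; monoidal
    _ = _ := by rw [hΨL, hΨL]; simp only [Functor.map_comp, id_tensorHom]; monoidal

set_option maxHeartbeats 1000000 in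
/-- For a left monoidal endofunctor `E` of a symmetric monoidal category, with
`Ψ^L_{A₁,A₂;B} := (ψ^L_{A₁,A₂} ⊗ 1_B) ∘ a⁻¹ ∘ (1_{EA₁} ⊗ c_{B,A₂}) ∘ a`, the equation
(Ψ^LΨ^L) holds (structural coherence isomorphisms inserted via `⊗≫`). -/
theorem PsiLPsiL {C : Type*} [Category C] [MonoidalCategory C] [SymmetricCategory C]
    (E : C ⥤ C)
    (ψL : ∀ A B : C, E.obj A ⊗ B ⟶ E.obj (A ⊗ B))
    (ψL_nat : ∀ {A A' B B' : C} (f : A ⟶ A') (g : B ⟶ B'),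
      (E.map f ⊗ₘ g) ≫ ψL A' B' = ψL A B ≫ E.map (f ⊗ₘ g))
    (ψLa : ∀ A B C' : C,
      (ψL A B ⊗ₘ 𝟙 C') ≫ ψL (A ⊗ B) C' ≫ E.map (α_ A B C').hom
        = (α_ (E.obj A) B C').hom ≫ ψL A (B ⊗ C'))
    (ψLr : ∀ A : C, ψL A (𝟙_ C) ≫ E.map (ρ_ A).hom = (ρ_ (E.obj A)).hom)
    (ΨL : ∀ A₁ A₂ B : C, (E.obj A₁ ⊗ B) ⊗ A₂ ⟶ E.obj (A₁ ⊗ A₂) ⊗ B)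
    (hΨL : ∀ A₁ A₂ B : C,
      ΨL A₁ A₂ B = (α_ (E.obj A₁) B A₂).hom ≫
        (𝟙 (E.obj A₁) ⊗ₘ (β_ B A₂).hom) ≫
        (α_ (E.obj A₁) A₂ B).inv ≫ (ψL A₁ A₂ ⊗ₘ 𝟙 B)) :
    ∀ A₁ A₂ A₃ B₁ B₂ : C,
      (𝟙 (E.obj A₁ ⊗ (B₁ ⊗ (A₂ ⊗ (B₂ ⊗ A₃)))) ⊗≫
        ΨL A₁ A₃ ((B₁ ⊗ A₂) ⊗ B₂) ⊗≫
        (ΨL (A₁ ⊗ A₃) A₂ B₁ ⊗ₘ 𝟙 B₂) ⊗≫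
        𝟙 (E.obj ((A₁ ⊗ A₃) ⊗ A₂) ⊗ (B₁ ⊗ B₂)))
      = (𝟙 (E.obj A₁ ⊗ (B₁ ⊗ (A₂ ⊗ (B₂ ⊗ A₃)))) ⊗≫
        (ΨL A₁ A₂ B₁ ⊗ₘ 𝟙 (B₂ ⊗ A₃)) ⊗≫
        ΨL (A₁ ⊗ A₂) A₃ (B₁ ⊗ B₂) ⊗≫
        ((E.map (α_ A₁ A₂ A₃).hom ≫ E.map (𝟙 A₁ ⊗ₘ (β_ A₂ A₃).hom) ≫
            E.map (α_ A₁ A₃ A₂).inv) ⊗ₘ 𝟙 (B₁ ⊗ B₂))) :=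
  PsiLPsiL_general E ψL ψL_nat ψLa ΨL hΨL
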